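/- arXiv:2210.14972 — 2 statements merged into one kernel-verified Lean document; each statement's English description precedes it below -/
import Mathlib

section
/- Let S be a finite nonempty state space, Π a finite nonempty set of policies, 𝒯 a finite nonempty set of environments, and for each T ∈ 𝒯 and π ∈ Π let d T π : S → ℝ be nonnegative occupancy weights with value V T π r = ∑_{s ∈ S} d T π s · r s for a reward r : S → ℝ. Let ι be a finite nonempty index set, w : ι → ℝ nonnegative weights with ∑_i w i = 1, r : ι → (S → ℝ) a family of rewards, and r̄ = ∑_i w i · r i the mean reward. Define the Bayesian regret BR(T, π) = ∑_i w i · ((max_{π' ∈ Π} V T π' (r i)) − V T π (r i)). If max_{T ∈ 𝒯} min_{π ∈ Π} BR(T, π) = 0, then for every T ∈ 𝒯, every policy π* ∈ argmax_{π ∈ Π} V T π r̄, and every i with w i > 0, one has V T π* (r i) = max_{π ∈ Π} V T π (r i); that is, the policy optimal for the posterior mean reward r̄ is optimal for every reward in the support of the belief, in every environment of 𝒯. -/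
/-- Lemma 1 of the paper (finitely supported posterior): if the maximin Bayesian
regret over environments is zero, then in every environment every policy that is
optimal for the posterior mean reward is optimal for every reward in the support
of the belief. -/
theorem maximin_bayes_regret_zero_mean_optimal
    {S Pol E ι : Type*} [Fintype S] [Nonempty S]
    [Fintype Pol] [Nonempty Pol] [Fintype E] [Nonempty E]
    [Fintype ι] [Nonempty ι]
    (d : E → Pol → S → ℝ) (hd : ∀ T π s, 0 ≤ d T π s)
    (w : ι → ℝ) (hw : ∀ i, 0 ≤ w i) (hw1 : ∑ i, w i = 1)
    (r : ι → S → ℝ)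
    (V : E → Pol → (S → ℝ) → ℝ)
    (hV : ∀ T π ρ, V T π ρ = ∑ s, d T π s * ρ s)
    (rbar : S → ℝ) (hrbar : ∀ s, rbar s = ∑ i, w i * r i s)
    (BR : E → Pol → ℝ)
    (hBR : ∀ T π, BR T π = ∑ i, w i * ((⨆ π' : Pol, V T π' (r i)) - V T π (r i)))
    (hzero : (⨆ T : E, ⨅ π : Pol, BR T π) = 0) :
    ∀ T : E, ∀ πstar : Pol,
      (∀ π : Pol, V T π rbar ≤ V T πstar rbar) →
      ∀ i : ι, 0 < w i → V T πstar (r i) = ⨆ π : Pol, V T π (r i) := by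
  intro T πstar hstar i hwi
  -- the sup is attained / bounded
  have hbdd : ∀ j : ι, BddAbove (Set.range fun π : Pol => V T π (r j)) :=
    fun j => (Set.finite_range _).bddAbove
  have hle_sup : ∀ (j : ι) (π : Pol), V T π (r j) ≤ ⨆ π' : Pol, V T π' (r j) :=
    fun j π => le_ciSup (hbdd j) π
  -- BR is nonnegative
  have hBRnn : ∀ π : Pol, 0 ≤ BR T π := by
    intro π
    rw [hBR]
    exact Finset.sum_nonneg fun j _ =>
      mul_nonneg (hw j) (sub_nonneg.mpr (hle_sup j π))
  -- there is a minimizing policy π0 with BR T π0 = 0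
  obtain ⟨π0, hπ0⟩ := Finite.exists_min (BR T)
  have hinf_le : (⨅ π : Pol, BR T π) ≤ 0 := by
    rw [← hzero]
    exact le_ciSup (Set.finite_range (fun T : E => ⨅ π : Pol, BR T π)).bddAbove T
  have hBR0 : BR T π0 = 0 :=
    le_antisymm (le_trans (le_ciInf hπ0) hinf_le) (hBRnn π0)
  -- each term of BR T π0 is zero
  have hterm : ∀ j : ι, w j * ((⨆ π' : Pol, V T π' (r j)) - V T π0 (r j)) = 0 := by
    have h := hBR T π0
    rw [hBR0] at h
    intro j
    exact (Finset.sum_eq_zero_iff_of_nonneg fun k _ =>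
      mul_nonneg (hw k) (sub_nonneg.mpr (hle_sup k π0))).mp h.symm j (Finset.mem_univ j)
  -- V is linear: V T π rbar = ∑ j, w j * V T π (r j)
  have hlin : ∀ π : Pol, V T π rbar = ∑ j, w j * V T π (r j) := by
    intro π
    rw [hV]
    simp only [hrbar, hV, Finset.mul_sum]
    rw [Finset.sum_comm]
    congr 1; ext j; congr 1; ext s; ring
  -- π0 achieves the sup on each j with w j > 0; in particular in aggregate
  have hπ0sum : ∑ j, w j * (⨆ π' : Pol, V T π' (r j)) ≤ ∑ j, w j * V T πstar (r j) := by
    have h1 : ∑ j, w j * (⨆ π' : Pol, V T π' (r j)) = ∑ j, w j * V T π0 (r j) := by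
      apply Finset.sum_congr rfl
      intro j _
      have := hterm j
      nlinarith [this]
    rw [h1, ← hlin, ← hlin]
    exact hstar π0
  -- termwise upper bound
  have hub : ∀ j ∈ Finset.univ, w j * V T πstar (r j) ≤ w j * (⨆ π' : Pol, V T π' (r j)) :=
    fun j _ => mul_le_mul_of_nonneg_left (hle_sup j πstar) (hw j)
  have heq : ∀ j ∈ Finset.univ,
      w j * V T πstar (r j) = w j * (⨆ π' : Pol, V T π' (r j)) :=
    (Finset.sum_eq_sum_iff_of_le hub).mp
      (le_antisymm (Finset.sum_le_sum hub) hπ0sum)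
  have := heq i (Finset.mem_univ i)
  exact mul_left_cancel₀ (ne_of_gt hwi) this
end

section
/- Let S be a finite nonempty state space, Π a finite nonempty set of policies, 𝒯 a finite nonempty set of environments, and for each T ∈ 𝒯, π ∈ Π let d T π : S → ℝ be nonnegative occupancy weights with value V T π r = ∑_{s ∈ S} d T π s · r s. Let ι be a finite nonempty index set, w : ι → ℝ nonnegative weights with ∑_i w i = 1, r : ι → (S → ℝ) rewards, and r̄ = ∑_i w i · r i. Define BR(T, π) = ∑_i w i · ((max_{π' ∈ Π} V T π' (r i)) − V T π (r i)). Then the maximin Bayesian regret admits the reformulation max_{T ∈ 𝒯} min_{π ∈ Π} BR(T, π) = max_{T ∈ 𝒯} ( ∑_i w i · (max_{π ∈ Π} V T π (r i)) − max_{π ∈ Π} V T π r̄ ). -/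
theorem aux_inf_sub {Pol : Type*} [Finite Pol] [Nonempty Pol] (c : ℝ) (f : Pol → ℝ) :
    ⨅ π, (c - f π) = c - ⨆ π, f π := by
  obtain ⟨π0, hπ0⟩ := Finite.exists_max f
  have h1 : ⨅ π, (c - f π) = c - f π0 :=
    le_antisymm (ciInf_le (Finite.bddBelow_range _) π0)
      (le_ciInf fun π => by linarith [hπ0 π])
  have h2 : ⨆ π, f π = f π0 :=
    le_antisymm (ciSup_le hπ0) (le_ciSup (Finite.bddAbove_range _) π0)
  rw [h1, h2]

/-- Reformulation of the maximin Bayesian regret objective using linearity of the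
value function in the reward (Section 4.2 of the paper). -/
theorem maximin_bayes_regret_reformulation
    {S Pol E ι : Type*} [Fintype S] [Nonempty S]
    [Fintype Pol] [Nonempty Pol] [Fintype E] [Nonempty E]
    [Fintype ι] [Nonempty ι]
    (d : E → Pol → S → ℝ) (hd : ∀ T π s, 0 ≤ d T π s)
    (w : ι → ℝ) (hw : ∀ i, 0 ≤ w i) (hw1 : ∑ i, w i = 1)
    (r : ι → S → ℝ)
    (V : E → Pol → (S → ℝ) → ℝ)
    (hV : ∀ T π ρ, V T π ρ = ∑ s, d T π s * ρ s)
    (rbar : S → ℝ) (hrbar : ∀ s, rbar s = ∑ i, w i * r i s)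
    (BR : E → Pol → ℝ)
    (hBR : ∀ T π, BR T π = ∑ i, w i * ((⨆ π' : Pol, V T π' (r i)) - V T π (r i))) :
    (⨆ T : E, ⨅ π : Pol, BR T π) =
      ⨆ T : E, ((∑ i, w i * (⨆ π : Pol, V T π (r i))) - ⨆ π : Pol, V T π rbar) := by
  have hlin : ∀ T π, ∑ i, w i * V T π (r i) = V T π rbar := by
    intro T π
    simp only [hV, hrbar, Finset.mul_sum]
    rw [Finset.sum_comm]
    congr 1; funext i; congr 1; funext s; ring
  have hkey : ∀ T π, BR T π =
      (∑ i, w i * (⨆ π' : Pol, V T π' (r i))) - V T π rbar := by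
    intro T π
    rw [hBR, ← hlin T π, ← Finset.sum_sub_distrib]
    congr 1; funext i; ring
  congr 1; funext T
  simp only [hkey]
  exact aux_inf_sub _ _
end
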